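/- arXiv:math/0102153 — 3 statements merged into one kernel-verified Lean document; each statement's English description precedes it below -/
import Mathlib

section
/- Let X be a metric space of bounded geometry, i.e. for every ε > 0 and R > 0 there is a number C such that every subset of a closed R-ball in X whose points are pairwise at distance ≥ ε contains at most C points. Then for every λ > 0 there exist a natural number m, a number R > 0, and a family 𝒰 of subsets of X covering X such that: diam(U) ≤ R for every U ∈ 𝒰; every point of X belongs to at most m members of 𝒰; and every closed ball of radius λ in X is contained in some member of 𝒰. -/
/-- A metric space of bounded geometry (every `ε`-separated subset of every
closed `R`-ball has at most `C = C(ε,R)` points) admits, for every `λ > 0`, a uniformly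
bounded cover of finite multiplicity `m` whose Lebesgue number is `≥ λ`. -/
theorem stmt6 (X : Type*) [MetricSpace X]
    (hbg : ∀ ε > (0 : ℝ), ∀ R > (0 : ℝ), ∃ C : ℕ, ∀ x : X, ∀ s : Set X,
      s ⊆ Metric.closedBall x R →
      (∀ y ∈ s, ∀ z ∈ s, y ≠ z → ε ≤ dist y z) →
      s.encard ≤ C)
    (lam : ℝ) (hlam : 0 < lam) :
    ∃ (m : ℕ) (R : ℝ) (𝒰 : Set (Set X)), 0 < R ∧
      (∀ x : X, ∃ u ∈ 𝒰, x ∈ u) ∧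
      (∀ u ∈ 𝒰, Bornology.IsBounded u ∧ Metric.diam u ≤ R) ∧
      (∀ x : X, {u ∈ 𝒰 | x ∈ u}.encard ≤ m) ∧
      (∀ x : X, ∃ u ∈ 𝒰, Metric.closedBall x lam ⊆ u) := by
  -- maximal lam-separated set
  obtain ⟨M, hMsep, hMmax⟩ : ∃ M, M ∈ {s : Set X | ∀ y ∈ s, ∀ z ∈ s, y ≠ z → lam ≤ dist y z} ∧
      ∀ t ∈ {s : Set X | ∀ y ∈ s, ∀ z ∈ s, y ≠ z → lam ≤ dist y z}, M ⊆ t → t ⊆ M := by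
    have hch : ∀ c ⊆ {s : Set X | ∀ y ∈ s, ∀ z ∈ s, y ≠ z → lam ≤ dist y z},
        IsChain (· ⊆ ·) c → ∃ ub ∈ {s : Set X | ∀ y ∈ s, ∀ z ∈ s, y ≠ z → lam ≤ dist y z},
          ∀ s ∈ c, s ⊆ ub := by
      intro c hc hchain
      refine ⟨⋃₀ c, ?_, fun s hs => Set.subset_sUnion_of_mem hs⟩
      intro y hy z hz hne
      obtain ⟨s, hs, hys⟩ := hy
      obtain ⟨t, ht, hzt⟩ := hz
      rcases hchain.total hs ht with h | h
      · exact hc ht y (h hys) z hzt hne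
      · exact hc hs y hys z (h hzt) hne
    obtain ⟨M, hM⟩ := zorn_subset _ hch
    exact ⟨M, hM.1, fun t ht hsub => hM.2 ht hsub⟩
  have hnear : ∀ x : X, ∃ d ∈ M, dist x d ≤ lam := by
    intro x
    by_cases hx : x ∈ M
    · exact ⟨x, hx, by simp [hlam.le]⟩
    by_contra h
    push_neg at h
    have : insert x M ⊆ M := by
      apply hMmax
      · intro y hy z hz hne
        rcases hy with rfl | hy
        · rcases hz with rfl | hz
          · exact absurd rfl hne
          · exact (h z hz).le
        · rcases hz with rfl | hz
          · rw [dist_comm]; exact (h y hy).le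
          · exact hMsep y hy z hz hne
      · exact Set.subset_insert _ _
    exact hx (this (Set.mem_insert x M))
  obtain ⟨C, hC⟩ := hbg lam hlam (2 * lam) (by linarith)
  refine ⟨C, 4 * lam, (fun d => Metric.closedBall d (2 * lam)) '' M, by linarith, ?_, ?_, ?_, ?_⟩
  · intro x
    obtain ⟨d, hd, hxd⟩ := hnear x
    exact ⟨_, ⟨d, hd, rfl⟩, by simpa using le_trans hxd (by linarith)⟩
  · rintro u ⟨d, _, rfl⟩
    refine ⟨Metric.isBounded_closedBall, ?_⟩
    calc Metric.diam (Metric.closedBall d (2 * lam)) ≤ 2 * (2 * lam) :=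
          Metric.diam_closedBall (by linarith)
      _ = 4 * lam := by ring
  · intro x
    have hsub : {u ∈ (fun d => Metric.closedBall d (2 * lam)) '' M | x ∈ u} ⊆
        (fun d => Metric.closedBall d (2 * lam)) '' {d ∈ M | d ∈ Metric.closedBall x (2 * lam)} := by
      rintro u ⟨⟨d, hd, rfl⟩, hxu⟩
      exact ⟨d, ⟨hd, by simpa [Metric.mem_closedBall, dist_comm] using hxu⟩, rfl⟩
    calc {u ∈ (fun d => Metric.closedBall d (2 * lam)) '' M | x ∈ u}.encard
        ≤ ((fun d => Metric.closedBall d (2 * lam)) ''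
            {d ∈ M | d ∈ Metric.closedBall x (2 * lam)}).encard := Set.encard_mono hsub
      _ ≤ {d ∈ M | d ∈ Metric.closedBall x (2 * lam)}.encard := Set.encard_image_le _ _
      _ ≤ C := hC x _ (fun d hd => hd.2)
              (fun y hy z hz hne => hMsep y hy.1 z hz.1 hne)
  · intro x
    obtain ⟨d, hd, hxd⟩ := hnear x
    refine ⟨_, ⟨d, hd, rfl⟩, fun y hy => ?_⟩
    simp only [Metric.mem_closedBall] at *
    calc dist y d ≤ dist y x + dist x d := dist_triangle _ _ _
      _ ≤ 2 * lam := by linarith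
end

section
/- Let {X_n} be an expander with conductance c > 0 and degree d. Then there exists a constant c₀ > 0 such that for every n and every map f from X_n to ℓ² that is 1-Lipschitz with respect to the graph metric of X_n, one has (1/|P_n|)·Σ_{{x,y} ∈ P_n} ‖f(x) − f(y)‖² ≤ c₀, where P_n is the set of unordered pairs of distinct vertices of X_n. -/
open Finset

/-- `‖f x - f y‖²` as a function of an unordered pair `{x, y}`. -/
noncomputable def sym2NormSq {V : Type*} {E : Type*} [NormedAddCommGroup E] (f : V → E) :
    Sym2 V → ℝ :=
  Sym2.lift ⟨fun x y => ‖f x - f y‖ ^ 2, fun x y => by simp [norm_sub_rev (f x)]⟩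

namespace Stmt8Aux

set_option linter.unusedSectionVars false
set_option linter.unusedVariables false
set_option maxHeartbeats 1000000

lemma posPart_sub (a : ℝ) : max a 0 - max (-a) 0 = a := by
  rcases le_total a 0 with h | h
  · rw [max_eq_right h, max_eq_left (by linarith)]; ring
  · rw [max_eq_left h, max_eq_right (by linarith)]; ring

lemma posPart_mul (a : ℝ) : max a 0 * max (-a) 0 = 0 := by
  rcases le_total a 0 with h | h
  · rw [max_eq_right h]; ring
  · rw [max_eq_right (by linarith : -a ≤ 0)]; ring

lemma posPart_sq (a : ℝ) : a ^ 2 = max a 0 ^ 2 + max (-a) 0 ^ 2 := by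
  have h1 := posPart_sub a
  have h2 := posPart_mul a
  calc a ^ 2 = (max a 0 - max (-a) 0) ^ 2 := by rw [h1]
  _ = max a 0 ^ 2 + max (-a) 0 ^ 2 - 2 * (max a 0 * max (-a) 0) := by ring
  _ = max a 0 ^ 2 + max (-a) 0 ^ 2 := by rw [h2]; ring

lemma posPart_sq_sub (a b : ℝ) :
    (max a 0 - max b 0) ^ 2 + (max (-a) 0 - max (-b) 0) ^ 2 ≤ (a - b) ^ 2 := by
  have ha1 := posPart_sub a
  have ha2 := posPart_mul a
  have hb1 := posPart_sub b
  have hb2 := posPart_mul b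
  have hp : 0 ≤ max a 0 := le_max_right _ _
  have hq : 0 ≤ max (-a) 0 := le_max_right _ _
  have hr : 0 ≤ max b 0 := le_max_right _ _
  have hs : 0 ≤ max (-b) 0 := le_max_right _ _
  nlinarith [mul_nonneg hp hs, mul_nonneg hr hq]

lemma sq_diff_le_posPart (a b : ℝ) (ha : 0 ≤ a) (hb : 0 ≤ b) :
    max (a ^ 2 - b ^ 2) 0 ≤ |a - b| * (a + b) := by
  rcases le_total b a with h | h
  · rw [max_eq_left (by nlinarith), abs_of_nonneg (by linarith)]; nlinarith
  · rw [max_eq_right (by nlinarith)]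
    positivity

variable {V : Type*} [Fintype V] [DecidableEq V]

lemma sum_adj_ite (G : SimpleGraph V) [DecidableRel G.Adj] (F : V → V → ℝ) :
    ∑ x, ∑ y ∈ G.neighborFinset x, F x y = ∑ x, ∑ y, if G.Adj x y then F x y else 0 := by
  refine Finset.sum_congr rfl fun x _ => ?_
  rw [SimpleGraph.neighborFinset_eq_filter, Finset.sum_filter]

lemma sum_adj_swap (G : SimpleGraph V) [DecidableRel G.Adj] (F : V → V → ℝ) :
    ∑ x, ∑ y ∈ G.neighborFinset x, F x y = ∑ x, ∑ y ∈ G.neighborFinset x, F y x := by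
  rw [sum_adj_ite, sum_adj_ite, Finset.sum_comm]
  refine Finset.sum_congr rfl fun x _ => Finset.sum_congr rfl fun y _ => ?_
  congr 1
  simp [G.adj_comm]

lemma sum_adj_sym2 (G : SimpleGraph V) [DecidableRel G.Adj] (φ : Sym2 V → ℝ) :
    ∑ x, ∑ y ∈ G.neighborFinset x, φ s(x, y) = 2 * ∑ e ∈ G.edgeFinset, φ e := by
  rw [Finset.sum_sigma' (univ : Finset V) (fun x => G.neighborFinset x)
    (fun x y => φ s(x, y))]
  rw [← Finset.sum_fiberwise_of_maps_to (g := fun p : Σ _ : V, V => s(p.1, p.2))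
      (t := G.edgeFinset)
      (fun p hp => by
        simp only [Finset.mem_sigma, SimpleGraph.mem_neighborFinset] at hp
        simpa [SimpleGraph.mem_edgeFinset] using hp.2)
      (fun p => φ s(p.1, p.2))]
  rw [Finset.mul_sum]
  refine Finset.sum_congr rfl fun e he => ?_
  induction e with
  | _ a b =>
    have hab : G.Adj a b := by simpa [SimpleGraph.mem_edgeFinset] using he
    have hne : a ≠ b := hab.ne
    have hfib : ((univ.sigma fun x => G.neighborFinset x).filter
        (fun p : Σ _ : V, V => s(p.1, p.2) = s(a, b)))
        = {⟨a, b⟩, ⟨b, a⟩} := by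
      ext ⟨x, y⟩
      simp only [Finset.mem_filter, Finset.mem_sigma, Finset.mem_univ, true_and,
        SimpleGraph.mem_neighborFinset, Finset.mem_insert, Finset.mem_singleton,
        Sym2.eq_iff]
      constructor
      · rintro ⟨-, (⟨rfl, rfl⟩ | ⟨rfl, rfl⟩)⟩
        · exact Or.inl rfl
        · exact Or.inr rfl
      · rintro (h | h)
        · cases h; exact ⟨hab, Or.inl ⟨rfl, rfl⟩⟩
        · cases h; exact ⟨hab.symm, Or.inr ⟨rfl, rfl⟩⟩
    rw [hfib]
    have hne' : (⟨a, b⟩ : Σ _ : V, V) ≠ ⟨b, a⟩ := by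
      intro h
      exact hne (congrArg Sigma.fst h)
    rw [Finset.sum_insert (by simpa using hne'), Finset.sum_singleton]
    have h1 : s(a, b) = s(b, a) := Sym2.eq_swap.symm
    rw [← h1]
    ring

lemma boundary_le_cut (G : SimpleGraph V) [DecidableRel G.Adj] (T : Finset V) :
    ({x : V | x ∉ T ∧ ∃ a ∈ T, G.Adj x a}.ncard : ℝ)
      ≤ ∑ x ∈ T, ((G.neighborFinset x \ T).card : ℝ) := by
  classical
  have hBset : {x : V | x ∉ T ∧ ∃ a ∈ T, G.Adj x a}
      = ((univ \ T).filter (fun x => ∃ a ∈ T, G.Adj x a) : Finset V) := by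
    ext x
    simp [Set.mem_setOf_eq, Finset.mem_filter, Finset.mem_sdiff]
  rw [hBset, Set.ncard_coe_finset]
  set B := (univ \ T).filter (fun x => ∃ a ∈ T, G.Adj x a) with hB
  have h1 : (B.card : ℝ) ≤ ∑ x ∈ univ \ T, ((G.neighborFinset x ∩ T).card : ℝ) := by
    have : (B.card : ℝ) = ∑ x ∈ B, (1 : ℝ) := by simp
    rw [this]
    have hsub : B ⊆ univ \ T := Finset.filter_subset _ _
    refine le_trans (Finset.sum_le_sum (fun x hx => ?_)) (Finset.sum_le_sum_of_subset_of_nonneg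
      hsub (fun x _ _ => by positivity))
    · obtain ⟨-, a, ha, hadj⟩ := Finset.mem_filter.mp hx
      have : a ∈ G.neighborFinset x ∩ T := by
        simp [SimpleGraph.mem_neighborFinset, hadj, ha]
      have hpos : 0 < (G.neighborFinset x ∩ T).card := Finset.card_pos.mpr ⟨a, this⟩
      exact_mod_cast hpos
  refine h1.trans (le_of_eq ?_)
  -- double counting
  have key : ∑ x ∈ univ \ T, ((G.neighborFinset x ∩ T).card : ℝ)
      = ∑ x ∈ T, ((G.neighborFinset x \ T).card : ℝ) := by
    have e1 : ∀ x, ((G.neighborFinset x ∩ T).card : ℝ)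
        = ∑ y ∈ T, if G.Adj x y then (1:ℝ) else 0 := by
      intro x
      have : G.neighborFinset x ∩ T = T.filter (fun y => G.Adj x y) := by
        ext y; simp [SimpleGraph.mem_neighborFinset, and_comm]
      rw [this, Finset.card_filter]
      push_cast
      rfl
    have e2 : ∀ x, ((G.neighborFinset x \ T).card : ℝ)
        = ∑ y ∈ univ \ T, if G.Adj x y then (1:ℝ) else 0 := by
      intro x
      have : G.neighborFinset x \ T = (univ \ T).filter (fun y => G.Adj x y) := by
        ext y
        simp [SimpleGraph.mem_neighborFinset, Finset.mem_sdiff, and_comm]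
      rw [this, Finset.card_filter]
      push_cast
      rfl
    simp only [e1, e2]
    rw [Finset.sum_comm]
    refine Finset.sum_congr rfl fun y hy => Finset.sum_congr rfl fun x hx => ?_
    congr 1
    simp [G.adj_comm]
  exact key

lemma coarea (G : SimpleGraph V) [DecidableRel G.Adj] (c : ℝ) (hc : 0 ≤ c)
    (hexp : ∀ A : Finset V, 2 * A.card ≤ Fintype.card V →
      c * A.card ≤ ({x : V | x ∉ A ∧ ∃ a ∈ A, G.Adj x a}.ncard : ℝ))
    (h : V → ℝ) (h0 : ∀ v, 0 ≤ h v)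
    (hsupp : 2 * (univ.filter fun v => 0 < h v).card ≤ Fintype.card V) :
    c * ∑ v, h v ≤ ∑ x, ∑ y ∈ G.neighborFinset x, max (h x - h y) 0 := by
  classical
  suffices H : ∀ k : ℕ, ∀ h : V → ℝ, (∀ v, 0 ≤ h v) →
      2 * (univ.filter fun v => 0 < h v).card ≤ Fintype.card V →
      ((univ.filter fun v => 0 < h v).image h).card ≤ k →
      c * ∑ v, h v ≤ ∑ x, ∑ y ∈ G.neighborFinset x, max (h x - h y) 0 by
    exact H _ h h0 hsupp le_rfl
  have base : ∀ h : V → ℝ, (∀ v, 0 ≤ h v) → (univ.filter fun v => 0 < h v) = ∅ →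
      c * ∑ v, h v ≤ ∑ x, ∑ y ∈ G.neighborFinset x, max (h x - h y) 0 := by
    intro h h0 hT
    have hz : ∀ v, h v = 0 := by
      intro v
      by_contra hv
      have : v ∈ (univ.filter fun v => 0 < h v) := by
        simp [lt_of_le_of_ne (h0 v) (Ne.symm hv)]
      simp [hT] at this
    have : ∑ v, h v = 0 := by simp [hz]
    rw [this, mul_zero]
    refine Finset.sum_nonneg fun x _ => Finset.sum_nonneg fun y _ => le_max_right _ _
  intro k
  induction k with
  | zero =>
    intro h h0 hs hk
    refine base h h0 ?_
    have := Nat.le_zero.mp hk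
    rw [Finset.card_eq_zero] at this
    rwa [Finset.image_eq_empty] at this
  | succ n ih =>
    intro h h0 hs hk
    set T := univ.filter fun v => 0 < h v with hTdef
    by_cases hT : T = ∅
    · exact base h h0 hT
    · have hTne : T.Nonempty := Finset.nonempty_of_ne_empty hT
      set m := (T.image h).min' (hTne.image h) with hmdef
      have hm_mem : m ∈ T.image h := Finset.min'_mem _ _
      obtain ⟨v₀, hv₀T, hv₀⟩ := Finset.mem_image.mp hm_mem
      have hm_pos : 0 < m := hv₀ ▸ (Finset.mem_filter.mp hv₀T).2
      have hm_le : ∀ v ∈ T, m ≤ h v := fun v hv =>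
        Finset.min'_le _ _ (Finset.mem_image_of_mem h hv)
      set h' : V → ℝ := fun v => if 0 < h v then h v - m else 0 with hh'
      have hvT : ∀ v : V, v ∈ T ↔ 0 < h v := fun v => by simp [hTdef]
      have hin : ∀ v ∈ T, h' v = h v - m := by
        intro v hv
        simp [hh', (hvT v).mp hv]
      have hout : ∀ (v : V), v ∉ T → h v = 0 ∧ h' v = 0 := by
        intro v hv
        have h1 : ¬ 0 < h v := fun hlt => hv ((hvT v).mpr hlt)
        exact ⟨le_antisymm (not_lt.mp h1) (h0 v), by simp [hh', h1]⟩
      have h'0 : ∀ v, 0 ≤ h' v := by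
        intro v
        by_cases hv : v ∈ T
        · rw [hin v hv]; linarith [hm_le v hv]
        · rw [(hout v hv).2]
      have hT'sub : (univ.filter fun v => 0 < h' v) ⊆ T := by
        intro v hv
        by_contra hvn
        have := (hout v hvn).2
        have h2 := (Finset.mem_filter.mp hv).2
        rw [this] at h2
        exact lt_irrefl 0 h2
      -- image cardinality decreases
      have himg : ((univ.filter fun v => 0 < h' v).image h').card ≤ n := by
        have hsub : (univ.filter fun v => 0 < h' v).image h'
            ⊆ ((T.image h).erase m).image (fun t => t - m) := by
          intro t ht
          obtain ⟨v, hv, rfl⟩ := Finset.mem_image.mp ht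
          have hvT' : v ∈ T := hT'sub hv
          have h'v : h' v = h v - m := hin v hvT'
          have hpos : 0 < h' v := (Finset.mem_filter.mp hv).2
          refine Finset.mem_image.mpr ⟨h v, ?_, by rw [h'v]⟩
          refine Finset.mem_erase.mpr ⟨?_, Finset.mem_image_of_mem h hvT'⟩
          intro he
          rw [h'v, he] at hpos
          simp at hpos
        calc ((univ.filter fun v => 0 < h' v).image h').card
            ≤ (((T.image h).erase m).image (fun t => t - m)).card := Finset.card_le_card hsub
          _ ≤ ((T.image h).erase m).card := Finset.card_image_le
          _ = (T.image h).card - 1 := Finset.card_erase_of_mem hm_mem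
          _ ≤ n := by omega
      have hs' : 2 * (univ.filter fun v => 0 < h' v).card ≤ Fintype.card V :=
        le_trans (Nat.mul_le_mul_left 2 (Finset.card_le_card hT'sub)) hs
      have IH := ih h' h'0 hs' himg
      -- sum decomposition
      have hsum : ∑ v, h v = ∑ v, h' v + m * T.card := by
        have hpt : ∀ v, h v = h' v + (if v ∈ T then m else 0) := by
          intro v
          by_cases hv : v ∈ T
          · rw [hin v hv]; simp [hv]
          · rw [(hout v hv).1, (hout v hv).2]; simp [hv]
        calc ∑ v, h v = ∑ v, (h' v + (if v ∈ T then m else 0)) :=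
              Finset.sum_congr rfl fun v _ => hpt v
          _ = ∑ v, h' v + ∑ v, (if v ∈ T then m else 0) := Finset.sum_add_distrib
          _ = ∑ v, h' v + m * T.card := by
              rw [Finset.sum_ite_mem, Finset.univ_inter, Finset.sum_const, nsmul_eq_mul]
              ring
      -- energy decomposition
      have hpt2 : ∀ x y : V, max (h x - h y) 0
          = max (h' x - h' y) 0 + (if x ∈ T ∧ y ∉ T then m else 0) := by
        intro x y
        by_cases hx : x ∈ T <;> by_cases hy : y ∈ T
        · simp only [hx, hy, not_true, and_false, if_false, add_zero]
          rw [hin x hx, hin y hy]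
          congr 1
          ring
        · simp only [hx, hy, not_false_iff, and_true, if_true]
          rw [hin x hx, (hout y hy).1, (hout y hy).2]
          have h1 : m ≤ h x := hm_le x hx
          rw [max_eq_left (by linarith), max_eq_left (by linarith)]
          ring
        · simp only [hx, hy, false_and, if_false, add_zero]
          rw [(hout x hx).1, (hout x hx).2, hin y hy]
          have h1 : 0 < h y := (hvT y).mp hy
          have h2 : 0 ≤ h' y := h'0 y
          rw [hin y hy] at h2
          rw [max_eq_right (by linarith), max_eq_right (by linarith)]
        · simp only [hx, hy, false_and, if_false, add_zero]
          rw [(hout x hx).1, (hout x hx).2, (hout y hy).1, (hout y hy).2]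
      have hcross : ∀ x : V, ∑ y ∈ G.neighborFinset x, (if x ∈ T ∧ y ∉ T then m else 0)
          = if x ∈ T then ((G.neighborFinset x \ T).card : ℝ) * m else 0 := by
        intro x
        by_cases hx : x ∈ T
        · simp only [hx, true_and, if_true]
          rw [← Finset.sum_filter]
          rw [show (G.neighborFinset x).filter (fun y => y ∉ T) = G.neighborFinset x \ T from
            (Finset.sdiff_eq_filter _ _).symm]
          rw [Finset.sum_const, nsmul_eq_mul]
        · simp [hx]
      have hD : ∑ x, ∑ y ∈ G.neighborFinset x, max (h x - h y) 0
          = (∑ x, ∑ y ∈ G.neighborFinset x, max (h' x - h' y) 0)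
            + m * ∑ x ∈ T, ((G.neighborFinset x \ T).card : ℝ) := by
        calc ∑ x, ∑ y ∈ G.neighborFinset x, max (h x - h y) 0
            = ∑ x, ∑ y ∈ G.neighborFinset x,
                (max (h' x - h' y) 0 + (if x ∈ T ∧ y ∉ T then m else 0)) :=
              Finset.sum_congr rfl fun x _ => Finset.sum_congr rfl fun y _ => hpt2 x y
          _ = (∑ x, ∑ y ∈ G.neighborFinset x, max (h' x - h' y) 0)
              + ∑ x, ∑ y ∈ G.neighborFinset x, (if x ∈ T ∧ y ∉ T then m else 0) := by
              rw [← Finset.sum_add_distrib]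
              exact Finset.sum_congr rfl fun x _ => Finset.sum_add_distrib
          _ = _ := by
              congr 1
              calc ∑ x, ∑ y ∈ G.neighborFinset x, (if x ∈ T ∧ y ∉ T then m else 0)
                  = ∑ x, (if x ∈ T then ((G.neighborFinset x \ T).card : ℝ) * m else 0) :=
                    Finset.sum_congr rfl fun x _ => hcross x
                _ = ∑ x ∈ T, ((G.neighborFinset x \ T).card : ℝ) * m := by
                    rw [Finset.sum_ite_mem, Finset.univ_inter]
                _ = m * ∑ x ∈ T, ((G.neighborFinset x \ T).card : ℝ) := by
                    rw [Finset.mul_sum]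
                    exact Finset.sum_congr rfl fun x _ => mul_comm _ _
      -- expansion
      have hTcard : 2 * T.card ≤ Fintype.card V := hs
      have hcut : c * T.card ≤ ∑ x ∈ T, ((G.neighborFinset x \ T).card : ℝ) :=
        (hexp T hTcard).trans (boundary_le_cut G T)
      have hmul : m * (c * T.card) ≤ m * ∑ x ∈ T, ((G.neighborFinset x \ T).card : ℝ) :=
        mul_le_mul_of_nonneg_left hcut hm_pos.le
      have heq : c * ∑ v, h v = c * ∑ v, h' v + m * (c * T.card) := by
        rw [hsum]; ring
      linarith [IH, hmul, hD.ge, hD.le, heq]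

lemma cheeger_scalar (G : SimpleGraph V) [DecidableRel G.Adj] (c : ℝ) (hc : 0 ≤ c)
    (d : ℕ) (hreg : ∀ v, G.degree v = d)
    (hexp : ∀ A : Finset V, 2 * A.card ≤ Fintype.card V →
      c * A.card ≤ ({x : V | x ∉ A ∧ ∃ a ∈ A, G.Adj x a}.ncard : ℝ))
    (g : V → ℝ) (g0 : ∀ v, 0 ≤ g v)
    (hsupp : 2 * (univ.filter fun v => 0 < g v).card ≤ Fintype.card V) :
    c ^ 2 * ∑ v, (g v) ^ 2
      ≤ 4 * d * ∑ x, ∑ y ∈ G.neighborFinset x, (g x - g y) ^ 2 := by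
  classical
  set Q : ℝ := ∑ v, (g v) ^ 2 with hQ
  set E : ℝ := ∑ x, ∑ y ∈ G.neighborFinset x, (g x - g y) ^ 2 with hE
  have hQ0 : 0 ≤ Q := Finset.sum_nonneg fun v _ => sq_nonneg _
  have hE0 : 0 ≤ E := Finset.sum_nonneg fun x _ => Finset.sum_nonneg fun y _ => sq_nonneg _
  -- step 1 : coarea applied to g²
  have hfilter : (univ.filter fun v => 0 < (g v) ^ 2) = (univ.filter fun v => 0 < g v) := by
    refine Finset.filter_congr fun v _ => ?_
    constructor
    · intro hv
      rcases lt_or_eq_of_le (g0 v) with h | h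
      · exact h
      · rw [← h] at hv; simp at hv
    · intro hv; positivity
  have h1 : c * Q ≤ ∑ x, ∑ y ∈ G.neighborFinset x, max ((g x) ^ 2 - (g y) ^ 2) 0 := by
    refine coarea G c hc hexp (fun v => (g v) ^ 2) (fun v => sq_nonneg _) ?_
    rw [hfilter]; exact hsupp
  -- step 2 : pointwise bound and Cauchy–Schwarz over the sigma finset
  set S : Finset (Σ _ : V, V) := univ.sigma (fun x => G.neighborFinset x) with hS
  have h2 : ∑ x, ∑ y ∈ G.neighborFinset x, max ((g x) ^ 2 - (g y) ^ 2) 0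
      ≤ ∑ p ∈ S, |g p.1 - g p.2| * (g p.1 + g p.2) := by
    rw [hS, Finset.sum_sigma]
    exact Finset.sum_le_sum fun x _ => Finset.sum_le_sum fun y _ =>
      sq_diff_le_posPart _ _ (g0 x) (g0 y)
  have hCS : (∑ p ∈ S, |g p.1 - g p.2| * (g p.1 + g p.2)) ^ 2
      ≤ (∑ p ∈ S, |g p.1 - g p.2| ^ 2) * ∑ p ∈ S, (g p.1 + g p.2) ^ 2 :=
    Finset.sum_mul_sq_le_sq_mul_sq S _ _
  have hsq : ∑ p ∈ S, |g p.1 - g p.2| ^ 2 = E := by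
    rw [hE, hS, Finset.sum_sigma]
    exact Finset.sum_congr rfl fun x _ => Finset.sum_congr rfl fun y _ => sq_abs _
  have hdeg : ∀ x : V, ((G.neighborFinset x).card : ℝ) = d := by
    intro x
    rw [SimpleGraph.card_neighborFinset_eq_degree, hreg]
  have hfst : ∑ p ∈ S, (g p.1) ^ 2 = d * Q := by
    rw [hS, Finset.sum_sigma, hQ, Finset.mul_sum]
    dsimp only
    refine Finset.sum_congr rfl fun x _ => ?_
    rw [Finset.sum_const, nsmul_eq_mul, SimpleGraph.card_neighborFinset_eq_degree, hreg]
  have hsnd : ∑ p ∈ S, (g p.2) ^ 2 = d * Q := by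
    rw [hS, Finset.sum_sigma]
    dsimp only
    rw [sum_adj_swap G (fun x y => (g y) ^ 2)]
    rw [hQ, Finset.mul_sum]
    refine Finset.sum_congr rfl fun x _ => ?_
    rw [Finset.sum_const, nsmul_eq_mul, SimpleGraph.card_neighborFinset_eq_degree, hreg]
  have hB : ∑ p ∈ S, (g p.1 + g p.2) ^ 2 ≤ 4 * d * Q := by
    have : ∑ p ∈ S, (g p.1 + g p.2) ^ 2 ≤ ∑ p ∈ S, (2 * (g p.1) ^ 2 + 2 * (g p.2) ^ 2) :=
      Finset.sum_le_sum fun p _ => by nlinarith [sq_nonneg (g p.1 - g p.2)]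
    calc ∑ p ∈ S, (g p.1 + g p.2) ^ 2
        ≤ ∑ p ∈ S, (2 * (g p.1) ^ 2 + 2 * (g p.2) ^ 2) := this
      _ = 2 * (∑ p ∈ S, (g p.1) ^ 2) + 2 * (∑ p ∈ S, (g p.2) ^ 2) := by
          rw [Finset.sum_add_distrib, Finset.mul_sum, Finset.mul_sum]
      _ = 4 * d * Q := by rw [hfst, hsnd]; ring
  -- combine
  have hX0 : 0 ≤ ∑ p ∈ S, |g p.1 - g p.2| * (g p.1 + g p.2) := le_trans (by
      refine Finset.sum_nonneg fun x _ => Finset.sum_nonneg fun y _ => le_max_right _ _) h2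
  have key : (c * Q) ^ 2 ≤ E * (4 * d * Q) := by
    have hcq : 0 ≤ c * Q := mul_nonneg hc hQ0
    have h3 : c * Q ≤ ∑ p ∈ S, |g p.1 - g p.2| * (g p.1 + g p.2) := le_trans h1 h2
    calc (c * Q) ^ 2 ≤ (∑ p ∈ S, |g p.1 - g p.2| * (g p.1 + g p.2)) ^ 2 := by
          exact pow_le_pow_left₀ hcq h3 2
      _ ≤ (∑ p ∈ S, |g p.1 - g p.2| ^ 2) * ∑ p ∈ S, (g p.1 + g p.2) ^ 2 := hCS
      _ ≤ E * (4 * d * Q) := by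
          rw [hsq]
          exact mul_le_mul_of_nonneg_left hB hE0
  rcases eq_or_lt_of_le hQ0 with hQz | hQpos
  · rw [← hQz, mul_zero]
    positivity
  · have : (c ^ 2 * Q) * Q ≤ (4 * d * E) * Q := by nlinarith [key]
    exact le_of_mul_le_mul_right this hQpos

lemma exists_median (f : V → ℝ) :
    ∃ m : ℝ, 2 * (univ.filter fun v => m < f v).card ≤ Fintype.card V ∧
      2 * (univ.filter fun v => f v < m).card ≤ Fintype.card V := by
  classical
  cases isEmpty_or_nonempty V with
  | inl h =>
    exact ⟨0, by simp [Finset.filter_eq_empty_iff.mpr (fun x _ => (h.false x).elim)], by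
      simp [Finset.filter_eq_empty_iff.mpr (fun x _ => (h.false x).elim)]⟩
  | inr h =>
    set n := Fintype.card V with hn
    have hsne : (univ.image f).Nonempty := (Finset.univ_nonempty).image f
    set M := (univ.image f).filter
      (fun t => 2 * (univ.filter fun v => t < f v).card ≤ n) with hM
    have hMne : M.Nonempty := by
      refine ⟨(univ.image f).max' hsne, Finset.mem_filter.mpr ⟨Finset.max'_mem _ _, ?_⟩⟩
      have : (univ.filter fun v => (univ.image f).max' hsne < f v) = ∅ := by
        refine Finset.filter_eq_empty_iff.mpr fun v _ => ?_
        exact not_lt.mpr (Finset.le_max' _ _ (Finset.mem_image_of_mem f (Finset.mem_univ v)))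
      rw [this]
      simp
    set m := M.min' hMne with hm
    have hm_mem : m ∈ M := Finset.min'_mem _ _
    refine ⟨m, (Finset.mem_filter.mp hm_mem).2, ?_⟩
    by_contra hlt
    push_neg at hlt
    set U := univ.filter (fun v => f v < m) with hU
    have hUne : U.Nonempty := by
      rw [← Finset.card_pos]
      omega
    have hUim : (U.image f).Nonempty := hUne.image f
    set m' := (U.image f).max' hUim with hm'
    obtain ⟨u, huU, hum'⟩ := Finset.mem_image.mp (Finset.max'_mem (U.image f) hUim)
    have hm'_lt : m' < m := by
      rw [hm', ← hum']
      exact (Finset.mem_filter.mp huU).2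
    have hkey : (univ.filter fun v => m' < f v) = univ \ U := by
      ext v
      constructor
      · intro hv
        refine Finset.mem_sdiff.mpr ⟨Finset.mem_univ v, fun hvU => ?_⟩
        have h1 : f v ≤ m' := by
          rw [hm']
          exact Finset.le_max' _ _ (Finset.mem_image_of_mem f hvU)
        exact absurd (Finset.mem_filter.mp hv).2 (not_lt.mpr h1)
      · intro hv
        have hvU : v ∉ U := (Finset.mem_sdiff.mp hv).2
        have h1 : ¬ f v < m := fun hlt => hvU (Finset.mem_filter.mpr ⟨Finset.mem_univ v, hlt⟩)
        exact Finset.mem_filter.mpr ⟨Finset.mem_univ v, lt_of_lt_of_le hm'_lt (not_lt.mp h1)⟩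
    have hUcard : U.card ≤ n := by
      rw [hn]
      exact (Finset.card_filter_le _ _).trans (by simp)
    have hcard2 : (univ.filter fun v => m' < f v).card = n - U.card := by
      rw [hkey, Finset.card_sdiff_of_subset (Finset.subset_univ U)]
      simp [hn]
    have hm'M : m' ∈ M := by
      refine Finset.mem_filter.mpr ⟨?_, ?_⟩
      · rw [hm', ← hum']
        exact Finset.mem_image_of_mem f (Finset.mem_univ u)
      · rw [hcard2]
        omega
    exact absurd (Finset.min'_le M m' hm'M) (not_le.mpr hm'_lt)

lemma poincare_scalar (G : SimpleGraph V) [DecidableRel G.Adj] (c : ℝ) (hc : 0 ≤ c)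
    (d : ℕ) (hreg : ∀ v, G.degree v = d)
    (hexp : ∀ A : Finset V, 2 * A.card ≤ Fintype.card V →
      c * A.card ≤ ({x : V | x ∉ A ∧ ∃ a ∈ A, G.Adj x a}.ncard : ℝ))
    (f : V → ℝ) :
    c ^ 2 * ∑ x, ∑ y, (f x - f y) ^ 2
      ≤ 16 * d * (Fintype.card V : ℝ) * ∑ x, ∑ y ∈ G.neighborFinset x, (f x - f y) ^ 2 := by
  classical
  obtain ⟨m, hm1, hm2⟩ := exists_median f
  set gp : V → ℝ := fun v => max (f v - m) 0 with hgp
  set gm : V → ℝ := fun v => max (m - f v) 0 with hgm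
  have hgp0 : ∀ v, 0 ≤ gp v := fun v => le_max_right _ _
  have hgm0 : ∀ v, 0 ≤ gm v := fun v => le_max_right _ _
  have hsupp_p : (univ.filter fun v => 0 < gp v) = (univ.filter fun v => m < f v) := by
    refine Finset.filter_congr fun v _ => ?_
    simp [hgp, lt_max_iff, sub_pos]
  have hsupp_m : (univ.filter fun v => 0 < gm v) = (univ.filter fun v => f v < m) := by
    refine Finset.filter_congr fun v _ => ?_
    simp [hgm, lt_max_iff, sub_pos]
  have hchp := cheeger_scalar G c hc d hreg hexp gp hgp0 (by rw [hsupp_p]; exact hm1)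
  have hchm := cheeger_scalar G c hc d hreg hexp gm hgm0 (by rw [hsupp_m]; exact hm2)
  -- decomposition of the variance
  have hdecomp : ∑ v, (f v - m) ^ 2 = ∑ v, (gp v) ^ 2 + ∑ v, (gm v) ^ 2 := by
    rw [← Finset.sum_add_distrib]
    refine Finset.sum_congr rfl fun v _ => ?_
    have := posPart_sq (f v - m)
    simpa [hgp, hgm, neg_sub] using this
  -- energy comparison
  have henergy : (∑ x, ∑ y ∈ G.neighborFinset x, (gp x - gp y) ^ 2)
      + (∑ x, ∑ y ∈ G.neighborFinset x, (gm x - gm y) ^ 2)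
      ≤ ∑ x, ∑ y ∈ G.neighborFinset x, (f x - f y) ^ 2 := by
    rw [← Finset.sum_add_distrib]
    refine Finset.sum_le_sum fun x _ => ?_
    rw [← Finset.sum_add_distrib]
    refine Finset.sum_le_sum fun y _ => ?_
    have := posPart_sq_sub (f x - m) (f y - m)
    have heq : (f x - m) - (f y - m) = f x - f y := by ring
    rw [heq] at this
    simpa [hgp, hgm, neg_sub] using this
  -- all-pairs bound via the median
  have hpairs : ∑ x, ∑ y, (f x - f y) ^ 2 ≤ 4 * (Fintype.card V : ℝ) * ∑ v, (f v - m) ^ 2 := by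
    have hpt : ∀ x y : V, (f x - f y) ^ 2 ≤ 2 * (f x - m) ^ 2 + 2 * (f y - m) ^ 2 := by
      intro x y
      nlinarith [sq_nonneg ((f x - m) + (f y - m)), sq_nonneg ((f x - m) - (f y - m))]
    calc ∑ x, ∑ y, (f x - f y) ^ 2
        ≤ ∑ x : V, ∑ y : V, (2 * (f x - m) ^ 2 + 2 * (f y - m) ^ 2) :=
          Finset.sum_le_sum fun x _ => Finset.sum_le_sum fun y _ => hpt x y
      _ = 4 * (Fintype.card V : ℝ) * ∑ v, (f v - m) ^ 2 := by
          simp only [Finset.sum_add_distrib, Finset.sum_const, Finset.card_univ,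
            nsmul_eq_mul, ← Finset.mul_sum]
          ring
    
  have hE0 : (0:ℝ) ≤ ∑ x, ∑ y ∈ G.neighborFinset x, (f x - f y) ^ 2 :=
    Finset.sum_nonneg fun x _ => Finset.sum_nonneg fun y _ => sq_nonneg _
  have hc2 : 0 ≤ c ^ 2 := sq_nonneg c
  have hn0 : (0:ℝ) ≤ (Fintype.card V : ℝ) := Nat.cast_nonneg _
  calc c ^ 2 * ∑ x, ∑ y, (f x - f y) ^ 2
      ≤ c ^ 2 * (4 * (Fintype.card V : ℝ) * ∑ v, (f v - m) ^ 2) :=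
        mul_le_mul_of_nonneg_left hpairs hc2
    _ = 4 * (Fintype.card V : ℝ) * (c ^ 2 * (∑ v, (gp v) ^ 2 + ∑ v, (gm v) ^ 2)) := by
        rw [hdecomp]; ring
    _ ≤ 4 * (Fintype.card V : ℝ) * (4 * d * ((∑ x, ∑ y ∈ G.neighborFinset x, (gp x - gp y) ^ 2)
          + (∑ x, ∑ y ∈ G.neighborFinset x, (gm x - gm y) ^ 2))) := by
        have h1 : c ^ 2 * (∑ v, (gp v) ^ 2 + ∑ v, (gm v) ^ 2)
            ≤ 4 * d * ((∑ x, ∑ y ∈ G.neighborFinset x, (gp x - gp y) ^ 2)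
              + (∑ x, ∑ y ∈ G.neighborFinset x, (gm x - gm y) ^ 2)) := by
          have := add_le_add hchp hchm
          nlinarith [this]
        have h4n : (0:ℝ) ≤ 4 * (Fintype.card V : ℝ) := by positivity
        exact mul_le_mul_of_nonneg_left h1 h4n
    _ ≤ 4 * (Fintype.card V : ℝ) * (4 * d * ∑ x, ∑ y ∈ G.neighborFinset x, (f x - f y) ^ 2) := by
        have h4d : (0:ℝ) ≤ 4 * d := by positivity
        have h4n : (0:ℝ) ≤ 4 * (Fintype.card V : ℝ) := by positivity
        exact mul_le_mul_of_nonneg_left (mul_le_mul_of_nonneg_left henergy h4d) h4n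
    _ = 16 * d * (Fintype.card V : ℝ) * ∑ x, ∑ y ∈ G.neighborFinset x, (f x - f y) ^ 2 := by
        ring

lemma norm_sq_eq_tsum (u : lp (fun _ : ℕ => ℝ) 2) : ‖u‖ ^ 2 = ∑' k, (u k) ^ 2 := by
  have h := lp.norm_rpow_eq_tsum (p := 2) (by norm_num) u
  have h2 : ‖u‖ ^ (2 : ℝ) = ∑' k, ‖u k‖ ^ (2 : ℝ) := by
    simpa using h
  have h3 : ‖u‖ ^ (2 : ℕ) = ‖u‖ ^ (2 : ℝ) := by
    rw [← Real.rpow_natCast ‖u‖ 2]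
    norm_num
  rw [h3, h2]
  refine tsum_congr fun k => ?_
  rw [show (2:ℝ) = ((2:ℕ):ℝ) by norm_num, Real.rpow_natCast, Real.norm_eq_abs, sq_abs]

lemma summable_coord_sq (u : lp (fun _ : ℕ => ℝ) 2) : Summable (fun k => (u k) ^ 2) := by
  have h := (lp.memℓp u).summable (p := 2) (by norm_num)
  refine h.congr fun k => ?_
  rw [show ENNReal.toReal 2 = ((2:ℕ):ℝ) by norm_num, Real.rpow_natCast, Real.norm_eq_abs,
    sq_abs]

lemma coord_sub (f : V → lp (fun _ : ℕ => ℝ) 2) (x y : V) (k : ℕ) :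
    (f x - f y) k = f x k - f y k := by
  rw [lp.coeFn_sub]
  rfl

lemma summable_diff_sq (f : V → lp (fun _ : ℕ => ℝ) 2) (x y : V) :
    Summable (fun k => (f x k - f y k) ^ 2) := by
  refine (summable_coord_sq (f x - f y)).congr fun k => ?_
  rw [coord_sub]

lemma poincare_hilbert (G : SimpleGraph V) [DecidableRel G.Adj] (c : ℝ) (hc : 0 ≤ c)
    (d : ℕ) (hreg : ∀ v, G.degree v = d)
    (hexp : ∀ A : Finset V, 2 * A.card ≤ Fintype.card V →
      c * A.card ≤ ({x : V | x ∉ A ∧ ∃ a ∈ A, G.Adj x a}.ncard : ℝ))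
    (hps : ∀ f : V → ℝ, c ^ 2 * ∑ x, ∑ y, (f x - f y) ^ 2
      ≤ 16 * d * (Fintype.card V : ℝ) * ∑ x, ∑ y ∈ G.neighborFinset x, (f x - f y) ^ 2)
    (f : V → lp (fun _ : ℕ => ℝ) 2) :
    c ^ 2 * ∑ x, ∑ y, ‖f x - f y‖ ^ 2
      ≤ 16 * d * (Fintype.card V : ℝ) * ∑ x, ∑ y ∈ G.neighborFinset x, ‖f x - f y‖ ^ 2 := by
  classical
  set A : ℕ → ℝ := fun k => ∑ x, ∑ y, (f x k - f y k) ^ 2 with hA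
  set B : ℕ → ℝ := fun k => ∑ x, ∑ y ∈ G.neighborFinset x, (f x k - f y k) ^ 2 with hB
  have hAsum : Summable A := by
    refine summable_sum fun x _ => summable_sum fun y _ => summable_diff_sq f x y
  have hBsum : Summable B := by
    refine summable_sum fun x _ => summable_sum fun y _ => summable_diff_sq f x y
  have hAeq : ∑ x, ∑ y, ‖f x - f y‖ ^ 2 = ∑' k, A k := by
    rw [hA]
    rw [Summable.tsum_finsetSum (fun x _ => summable_sum fun y _ => summable_diff_sq f x y)]
    refine Finset.sum_congr rfl fun x _ => ?_
    rw [Summable.tsum_finsetSum (fun y _ => summable_diff_sq f x y)]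
    refine Finset.sum_congr rfl fun y _ => ?_
    rw [norm_sq_eq_tsum]
    exact tsum_congr fun k => by rw [coord_sub]
  have hBeq : ∑ x, ∑ y ∈ G.neighborFinset x, ‖f x - f y‖ ^ 2 = ∑' k, B k := by
    rw [hB]
    rw [Summable.tsum_finsetSum (fun x _ => summable_sum fun y _ => summable_diff_sq f x y)]
    refine Finset.sum_congr rfl fun x _ => ?_
    rw [Summable.tsum_finsetSum (fun y _ => summable_diff_sq f x y)]
    refine Finset.sum_congr rfl fun y _ => ?_
    rw [norm_sq_eq_tsum]
    exact tsum_congr fun k => by rw [coord_sub]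
  have hptk : ∀ k, c ^ 2 * A k ≤ 16 * d * (Fintype.card V : ℝ) * B k := fun k =>
    hps (fun v => f v k)
  rw [hAeq, hBeq, ← tsum_mul_left, ← tsum_mul_left]
  exact Summable.tsum_le_tsum hptk (by exact hAsum.mul_left _) (by exact hBsum.mul_left _)

end Stmt8Aux

open Stmt8Aux in
/-- For an expander `{X_n}` with conductance `c > 0` and degree `d` there is a
constant `c₀ > 0` such that for every `n` and every map `f : X_n → ℓ²` that is 1-Lipschitz
w.r.t. the graph metric, `(1/|P_n|)·Σ_{{x,y} ∈ P_n} ‖f(x) − f(y)‖² ≤ c₀`, where `P_n` is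
the set of unordered pairs of distinct vertices (the edge set of the complete graph). -/
theorem stmt8
    (V : ℕ → Type) [∀ n, Fintype (V n)] [∀ n, DecidableEq (V n)]
    (G : ∀ n, SimpleGraph (V n)) [∀ n, DecidableRel (G n).Adj]
    (c : ℝ) (hc : 0 < c) (d : ℕ)
    (hconn : ∀ n, (G n).Connected)
    (hreg : ∀ n, ∀ v : V n, (G n).degree v = d)
    (hcard : Filter.Tendsto (fun n => Fintype.card (V n)) Filter.atTop Filter.atTop)
    (hexp : ∀ n, ∀ A : Finset (V n), 2 * A.card ≤ Fintype.card (V n) →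
      c * A.card ≤ ({x : V n | x ∉ A ∧ ∃ a ∈ A, (G n).Adj x a}.ncard : ℝ)) :
    ∃ c₀ : ℝ, 0 < c₀ ∧
      ∀ n, ∀ f : V n → lp (fun _ : ℕ => ℝ) 2,
        (∀ x y : V n, ‖f x - f y‖ ≤ ((G n).dist x y : ℝ)) →
        (1 / (((⊤ : SimpleGraph (V n)).edgeFinset.card : ℝ))) *
            ∑ e ∈ (⊤ : SimpleGraph (V n)).edgeFinset, sym2NormSq f e ≤ c₀ := by
  classical
  -- the degree is at least 1
  have hd1 : 1 ≤ d := by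
    obtain ⟨n, hn2⟩ := (hcard.eventually_ge_atTop 2).exists
    obtain ⟨v, w, hvw⟩ := Fintype.exists_pair_of_one_lt_card (α := V n) (by omega)
    obtain ⟨p⟩ := (hconn n).preconnected v w
    cases p with
    | nil => exact absurd rfl hvw
    | @cons _ u _ h q =>
      have hpos : 0 < (G n).degree v := by
        rw [← SimpleGraph.card_neighborFinset_eq_degree]
        exact Finset.card_pos.mpr ⟨u, ((G n).mem_neighborFinset v u).mpr h⟩
      rw [hreg n v] at hpos
      omega
  refine ⟨32 * (d : ℝ) ^ 2 / c ^ 2, by positivity, ?_⟩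
  intro n f hf
  set S : ℝ := ∑ e ∈ (⊤ : SimpleGraph (V n)).edgeFinset, sym2NormSq f e with hS
  have hS0 : 0 ≤ S := by
    refine Finset.sum_nonneg fun e he => ?_
    induction e with
    | _ a b => exact sq_nonneg _
  by_cases hn1 : Fintype.card (V n) ≤ 1
  · -- degenerate case : at most one vertex, no pairs
    have hcard0 : ((⊤ : SimpleGraph (V n)).edgeFinset.card) = 0 := by
      rw [SimpleGraph.card_edgeFinset_top_eq_card_choose_two]
      interval_cases h : Fintype.card (V n) <;> simp
    have hempty : (⊤ : SimpleGraph (V n)).edgeFinset = ∅ := Finset.card_eq_zero.mp hcard0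
    rw [hS, hempty]
    simp
    positivity
  · push_neg at hn1
    set N : ℝ := (Fintype.card (V n) : ℝ) with hN
    have hN2 : (2 : ℝ) ≤ N := by
      have h2 : 2 ≤ Fintype.card (V n) := hn1
      rw [hN]
      exact_mod_cast h2
    -- sum over unordered pairs versus double sum
    have h2S : ∑ x, ∑ y ∈ (⊤ : SimpleGraph (V n)).neighborFinset x, ‖f x - f y‖ ^ 2
        = 2 * S := by
      rw [hS, ← sum_adj_sym2 (⊤ : SimpleGraph (V n)) (sym2NormSq f)]
      refine Finset.sum_congr rfl fun x _ => Finset.sum_congr rfl fun y _ => ?_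
      simp [sym2NormSq]
    have hfull : ∑ x, ∑ y, ‖f x - f y‖ ^ 2
        = ∑ x, ∑ y ∈ (⊤ : SimpleGraph (V n)).neighborFinset x, ‖f x - f y‖ ^ 2 := by
      refine Finset.sum_congr rfl fun x _ => ?_
      have hNx : (⊤ : SimpleGraph (V n)).neighborFinset x = Finset.univ.erase x := by
        ext y
        simp [SimpleGraph.mem_neighborFinset, ne_comm, eq_comm]
      rw [hNx]
      exact (Finset.sum_erase _ (by simp)).symm
    -- Poincaré inequality
    have hpoin := poincare_hilbert (G n) c hc.le d (hreg n) (hexp n)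
      (poincare_scalar (G n) c hc.le d (hreg n) (hexp n)) f
    -- energy bound from the Lipschitz hypothesis
    have hlip : ∀ x y : V n, (G n).Adj x y → ‖f x - f y‖ ^ 2 ≤ 1 := by
      intro x y hxy
      have h1 : ‖f x - f y‖ ≤ 1 := by
        have := hf x y
        rw [(SimpleGraph.dist_eq_one_iff_adj).mpr hxy] at this
        exact_mod_cast this
      calc ‖f x - f y‖ ^ 2 ≤ 1 ^ 2 := pow_le_pow_left₀ (norm_nonneg _) h1 2
        _ = 1 := one_pow 2
    have henergy : ∑ x, ∑ y ∈ (G n).neighborFinset x, ‖f x - f y‖ ^ 2 ≤ d * N := by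
      calc ∑ x, ∑ y ∈ (G n).neighborFinset x, ‖f x - f y‖ ^ 2
          ≤ ∑ x : V n, ∑ y ∈ (G n).neighborFinset x, (1 : ℝ) :=
            Finset.sum_le_sum fun x _ => Finset.sum_le_sum fun y hy =>
              hlip x y (((G n).mem_neighborFinset x y).mp hy)
        _ = ∑ x : V n, ((G n).degree x : ℝ) := by
            refine Finset.sum_congr rfl fun x _ => ?_
            rw [Finset.sum_const, nsmul_eq_mul, mul_one,
              SimpleGraph.card_neighborFinset_eq_degree]
        _ = d * N := by
            rw [hN]
            simp [hreg n, Finset.sum_const, Finset.card_univ, mul_comm]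
    -- combine
    have hkey : c ^ 2 * (2 * S) ≤ 16 * d * N * (d * N) := by
      rw [← h2S, ← hfull]
      refine hpoin.trans ?_
      have h16 : (0:ℝ) ≤ 16 * d * N := by positivity
      exact mul_le_mul_of_nonneg_left henergy h16
    -- the number of pairs
    have hEcard : (((⊤ : SimpleGraph (V n)).edgeFinset.card : ℕ) : ℝ) = N * (N - 1) / 2 := by
      rw [SimpleGraph.card_edgeFinset_top_eq_card_choose_two, Nat.cast_choose_two, hN]
    have hEpos : (0:ℝ) < (((⊤ : SimpleGraph (V n)).edgeFinset.card : ℕ) : ℝ) := by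
      rw [hEcard]
      nlinarith [hN2]
    rw [one_div, inv_mul_le_iff₀ hEpos, hEcard]
    have hd0 : (1:ℝ) ≤ (d:ℝ) := by exact_mod_cast hd1
    have hc2 : (0:ℝ) < c ^ 2 := by positivity
    rw [show N * (N - 1) / 2 * (32 * (d:ℝ) ^ 2 / c ^ 2)
      = (N * (N - 1) * (16 * (d:ℝ) ^ 2)) / c ^ 2 by ring, le_div_iff₀ hc2]
    nlinarith [hkey, mul_nonneg (mul_nonneg (sq_nonneg (d:ℝ)) (by linarith : (0:ℝ) ≤ N))
      (by linarith : (0:ℝ) ≤ N - 2), sq_nonneg (d:ℝ), hN2, hd0]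
end

section
/- Let {X_n} be an expander with conductance c > 0 and degree d. Then the sequence {X_n} admits no uniform embedding into ℓ²: there do not exist functions ρ₁, ρ₂ : ℝ₊ → ℝ₊ with ρ₁(t) → ∞ as t → ∞ and a sequence of maps f_n : X_n → ℓ² such that ρ₁(d(x,y)) ≤ ‖f_n(x) − f_n(y)‖ ≤ ρ₂(d(x,y)) for all n and all vertices x, y of X_n. -/
/-!
An expander satisfies a Poincaré inequality
`c² ∑_{x,y} ‖f x - f y‖² ≤ 4 d |X| ∑_{x ~ y} ‖f x - f y‖²` for every `f : X → ℓ²`.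
For real `f ≥ 0` supported on at most half of the vertices, peeling off the level sets of `f²` one
at a time turns the isoperimetric inequality into `2c ∑ f² ≤ ∑_{x ~ y} |f x² - f y²|`, and
Cauchy–Schwarz gives `c² ∑ f² ≤ d ∑_{x ~ y} (f x - f y)²`; a general real `f` is split into the
positive and negative parts of `f - m` for a median `m`, and an `ℓ²`-valued one into coordinates.
Under a uniform embedding the right-hand side is at most `4 d² |X|² ρ₂(1)²`. Balls of radius `R`
have at most `(d + 1)^R` points, so once `|X| ≥ 2 (d + 1)^R` at least half of all pairs lie at
distance `> R`, and the left-hand side is at least `c² |X|² ρ₁(R)² / 2`. Hence `ρ₁` stays bounded.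
-/

open Finset

lemma sq_eq_posPart_sq_add_negPart_sq (a : ℝ) : a ^ 2 = a⁺ ^ 2 + a⁻ ^ 2 := by
  simp only [posPart_def, negPart_def]
  rcases le_total a 0 with ha | ha <;> simp [ha]

lemma posPart_sub_sq_add_negPart_sub_sq_le (a b : ℝ) :
    (a⁺ - b⁺) ^ 2 + (a⁻ - b⁻) ^ 2 ≤ (a - b) ^ 2 := by
  simp only [posPart_def, negPart_def]
  rcases le_total a 0 with ha | ha <;> rcases le_total b 0 with hb | hb <;>
    simp [ha, hb] <;> nlinarith

lemma lp.hasSum_sq {ι : Type*} (v : lp (fun _ : ι => ℝ) 2) :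
    HasSum (fun i => v i ^ 2) (‖v‖ ^ 2) := by
  have hsum : Summable fun i => v i ^ 2 := by simpa [sq] using lp.summable_inner (𝕜 := ℝ) v v
  refine hsum.hasSum_iff.2 ?_
  rw [← real_inner_self_eq_norm_sq, lp.inner_eq_tsum]
  simp [sq]

lemma exists_median {α : Type*} [Fintype α] (g : α → ℝ) :
    ∃ m, 2 * #{x | m < g x} ≤ Fintype.card α ∧ 2 * #{x | g x < m} ≤ Fintype.card α := by
  classical
  rcases isEmpty_or_nonempty α with hα | hα
  · exact ⟨0, by simp, by simp⟩
  set T : Finset ℝ := (univ.image g).filter fun t => 2 * #{x | g x < t} ≤ Fintype.card α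
  obtain ⟨x₀, -, hx₀⟩ := exists_min_image univ g univ_nonempty
  have hT : T.Nonempty :=
    ⟨g x₀, mem_filter.2 ⟨mem_image_of_mem _ (mem_univ _), by
      simp [filter_eq_empty_iff.2 fun x _ => not_lt.2 (hx₀ x (mem_univ x))]⟩⟩
  -- If more than half of the points exceeded `m`, their least value would lie in `T` too.
  set m := T.max' hT
  refine ⟨m, ?_, (mem_filter.1 (T.max'_mem hT)).2⟩
  by_contra! hbig
  obtain ⟨y, hy, hy_min⟩ := exists_min_image {x | m < g x} g (card_pos.1 (by omega))
  have hlt : #{x | g x < g y} = #{x | ¬ m < g x} := by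
    refine congrArg card <| filter_congr fun x _ =>
      ⟨fun hx hmx => ?_, fun hx => (not_lt.1 hx).trans_lt ?_⟩
    · exact (hy_min x (mem_filter.2 ⟨mem_univ x, hmx⟩)).not_gt hx
    · exact (mem_filter.1 hy).2
  have hyT : g y ∈ T := by
    refine mem_filter.2 ⟨mem_image_of_mem _ (mem_univ _), ?_⟩
    have := card_filter_add_card_filter_not (s := univ) (fun x => m < g x)
    rw [card_univ] at this
    rw [hlt]
    omega
  exact (T.le_max' _ hyT).not_gt (mem_filter.1 hy).2

lemma sum_sum_sq_sub_le {α : Type*} [Fintype α] (g : α → ℝ) (m : ℝ) :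
    ∑ x, ∑ y, (g x - g y) ^ 2 ≤ 4 * Fintype.card α * ∑ x, (g x - m) ^ 2 :=
  calc ∑ x, ∑ y, (g x - g y) ^ 2 ≤ ∑ x, ∑ y, (2 * (g x - m) ^ 2 + 2 * (g y - m) ^ 2) :=
        sum_le_sum fun x _ => sum_le_sum fun y _ => by nlinarith [sq_nonneg (g x + g y - 2 * m)]
    _ = 4 * Fintype.card α * ∑ x, (g x - m) ^ 2 := by
        simp only [sum_add_distrib, sum_const, card_univ, nsmul_eq_mul, ← mul_sum]
        ring

namespace SimpleGraph

variable {V : Type*} [Fintype V] (G : SimpleGraph V) [DecidableRel G.Adj]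

def vertexBoundary (A : Finset V) : Set V := {x | x ∉ A ∧ ∃ a ∈ A, G.Adj x a}

def IsVertexExpander (c : ℝ) : Prop :=
  ∀ A : Finset V, 2 * #A ≤ Fintype.card V → c * #A ≤ (G.vertexBoundary A).ncard

lemma sum_dart_fst {M : Type*} [AddCommMonoid M] (F : V → M) :
    ∑ e : G.Dart, F e.fst = ∑ v, G.degree v • F v := by
  classical
  rw [← sum_fiberwise univ (fun e : G.Dart => e.fst)]
  refine sum_congr rfl fun v _ => ?_
  rw [sum_congr rfl fun e he => by rw [(mem_filter.1 he).2], sum_const]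
  congr 1
  convert G.dart_fst_fiber_card_eq_degree v

lemma sum_dart_fst_le {d : ℕ} (hdeg : ∀ v, G.degree v ≤ d) {F : V → ℝ} (hF : 0 ≤ F) :
    ∑ e : G.Dart, F e.fst ≤ d * ∑ v, F v := by
  rw [sum_dart_fst, mul_sum]
  exact sum_le_sum fun v _ => by
    rw [nsmul_eq_mul]; exact mul_le_mul_of_nonneg_right (by exact_mod_cast hdeg v) (hF v)

lemma sum_dart_swap {M : Type*} [AddCommMonoid M] (F : V → V → M) :
    ∑ e : G.Dart, F e.fst e.snd = ∑ e : G.Dart, F e.snd e.fst :=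
  Fintype.sum_equiv (Dart.symm_involutive.toPerm _) _ _ fun _ => rfl

lemma sum_dart_sq_add_le {d : ℕ} (hdeg : ∀ v, G.degree v ≤ d) (h : V → ℝ) :
    ∑ e : G.Dart, (h e.fst + h e.snd) ^ 2 ≤ 4 * d * ∑ v, h v ^ 2 :=
  calc ∑ e : G.Dart, (h e.fst + h e.snd) ^ 2
      ≤ ∑ e : G.Dart, (2 * h e.fst ^ 2 + 2 * h e.snd ^ 2) :=
        sum_le_sum fun e _ => by nlinarith [sq_nonneg (h e.fst - h e.snd)]
    _ = 4 * ∑ e : G.Dart, h e.fst ^ 2 := by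
        rw [sum_add_distrib, ← mul_sum, ← mul_sum, G.sum_dart_swap fun _ y => h y ^ 2]
        ring
    _ ≤ 4 * (d * ∑ v, h v ^ 2) := by
        gcongr
        exact G.sum_dart_fst_le hdeg fun v => sq_nonneg (h v)
    _ = 4 * d * ∑ v, h v ^ 2 := by ring

lemma sum_dart_abs_sub (u : V → ℝ) :
    ∑ e : G.Dart, |u e.fst - u e.snd| = 2 * ∑ e : G.Dart, (u e.snd - u e.fst)⁺ := by
  simp_rw [← posPart_add_negPart, ← posPart_neg, neg_sub, sum_add_distrib,
    G.sum_dart_swap fun x y => (u x - u y)⁺]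
  ring

lemma ncard_vertexBoundary_le [DecidableEq V] (A : Finset V) :
    (G.vertexBoundary A).ncard ≤ #{e : G.Dart | e.fst ∉ A ∧ e.snd ∈ A} := by
  have hsub : G.vertexBoundary A ⊆
      (({e : G.Dart | e.fst ∉ A ∧ e.snd ∈ A} : Finset _).image fun e => e.fst : Set V) := by
    rintro x ⟨hx, a, ha, hxa⟩
    simp only [coe_image, coe_filter, mem_univ, true_and, Set.mem_image, Set.mem_ofPred_eq]
    exact ⟨⟨(x, a), hxa⟩, ⟨hx, ha⟩, rfl⟩
  exact (Set.ncard_le_ncard hsub).trans (by rw [Set.ncard_coe_finset]; exact card_image_le)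

lemma sum_dart_posPart_truncate_add_le [DecidableEq V] {u : V → ℝ} {A : Finset V} {t : ℝ}
    (ht : 0 ≤ t) (hA : ∀ x ∈ A, t ≤ u x) (hAc : ∀ x ∉ A, u x = 0) :
    ∑ e : G.Dart, ((u e.snd - t)⁺ - (u e.fst - t)⁺)⁺ + t * #{e : G.Dart | e.fst ∉ A ∧ e.snd ∈ A}
      ≤ ∑ e : G.Dart, (u e.snd - u e.fst)⁺ := by
  have key : ∀ a b : V, ((u b - t)⁺ - (u a - t)⁺)⁺ + (if a ∉ A ∧ b ∈ A then t else 0)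
      ≤ (u b - u a)⁺ := by
    intro a b
    by_cases ha : a ∈ A <;> by_cases hb : b ∈ A
    · simp [ha, hb, posPart_eq_self.2 (sub_nonneg.2 (hA a ha)),
        posPart_eq_self.2 (sub_nonneg.2 (hA b hb))]
    · simp [ha, hb, hAc b hb, negPart_eq_zero.2 ht, hA a ha]
    · simp [ha, hb, hAc a ha, posPart_eq_self.2 (sub_nonneg.2 (hA b hb)), ht, le_posPart]
    · simp [ha, hb, hAc a ha, hAc b hb, ht]
  calc _ = ∑ e : G.Dart, (((u e.snd - t)⁺ - (u e.fst - t)⁺)⁺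
          + if e.fst ∉ A ∧ e.snd ∈ A then t else 0) := by
        rw [sum_add_distrib, ← sum_filter, sum_const, nsmul_eq_mul, mul_comm]
    _ ≤ _ := sum_le_sum fun e _ => key e.fst e.snd

theorem card_filter_dist_le_le_pow (hconn : G.Connected) {d : ℕ} (hdeg : ∀ v, G.degree v ≤ d)
    (x : V) (R : ℕ) : #{y | G.dist x y ≤ R} ≤ (d + 1) ^ R := by
  classical
  induction R with
  | zero =>
    calc #{y | G.dist x y ≤ 0} ≤ #{x} := card_le_card fun y hy => by
          simpa using (hconn.dist_eq_zero_iff.1 (Nat.le_zero.1 (mem_filter.1 hy).2)).symm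
      _ = (d + 1) ^ 0 := by simp
  | succ R ih =>
    have hsub : ({y | G.dist x y ≤ R + 1} : Finset V) ⊆
        ({y | G.dist x y ≤ R} : Finset V).biUnion fun y => insert y (G.neighborFinset y) := by
      intro z hz
      obtain ⟨p, hp⟩ := hconn.exists_walk_length_eq_dist z x
      simp only [mem_biUnion, mem_filter, mem_univ, true_and, mem_insert, mem_neighborFinset]
        at hz ⊢
      cases p with
      | nil => exact ⟨x, by simp, Or.inl rfl⟩
      | cons hadj q =>
        refine ⟨_, ?_, Or.inr hadj.symm⟩
        have := G.dist_le q
        rw [Walk.length_cons, dist_comm] at hp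
        rw [dist_comm]
        omega
    calc _ ≤ _ := card_le_card hsub
      _ ≤ #{y | G.dist x y ≤ R} * (d + 1) := card_biUnion_le_card_mul _ _ _ fun y _ =>
          (card_insert_le _ _).trans <| by
            rw [card_neighborFinset_eq_degree]; exact Nat.succ_le_succ (hdeg y)
      _ ≤ (d + 1) ^ (R + 1) := by rw [pow_succ]; exact Nat.mul_le_mul_right _ ih

section Expander

variable {G}

theorem IsVertexExpander.mul_sum_le_sum_dart_posPart {c : ℝ} (hG : G.IsVertexExpander c)
    {u : V → ℝ} (hu : 0 ≤ u) (hsupp : 2 * #{x | u x ≠ 0} ≤ Fintype.card V) :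
    c * ∑ x, u x ≤ ∑ e : G.Dart, (u e.snd - u e.fst)⁺ := by
  classical
  induction hn : #{x | u x ≠ 0} using Nat.strong_induction_on generalizing u with
  | _ n ih =>
  set A : Finset V := {x | u x ≠ 0}
  have hAc : ∀ x ∉ A, u x = 0 := fun x hx => by simpa [A] using hx
  rcases A.eq_empty_or_nonempty with hA | hA
  · simp [hAc, hA]
  -- Peel off the lowest level `t` of `u`: the support of `(u - t)⁺` misses a minimiser.
  obtain ⟨x₀, hx₀, ht⟩ := A.exists_mem_eq_inf' hA u
  set t := A.inf' hA u
  have ht_le : ∀ x ∈ A, t ≤ u x := fun x hx => inf'_le _ hx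
  have ht_pos : 0 < t := ht ▸ (hu x₀).lt_of_ne' (by simpa [A] using hx₀)
  set w : V → ℝ := fun x => (u x - t)⁺
  have hw_supp : ({x | w x ≠ 0} : Finset V) ⊆ A.erase x₀ := by
    intro x hx
    have hx : t < u x := by simpa [w] using hx
    refine mem_erase.2 ⟨fun h => ?_, ?_⟩
    · subst h; exact hx.ne ht
    · by_contra hxA; linarith [hAc x hxA]
  have hw_card : #{x | w x ≠ 0} < n :=
    hn ▸ (card_le_card hw_supp).trans_lt (card_erase_lt_of_mem hx₀)
  have ih_w := ih _ hw_card (u := w) (fun x => posPart_nonneg _) (by omega) rfl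
  have hsum : ∑ x, u x = ∑ x, w x + t * #A := by
    have hsplit : ∀ x, u x = w x + if x ∈ A then t else 0 := fun x => by
      by_cases hx : x ∈ A
      · simp [w, hx, posPart_eq_self.2 (sub_nonneg.2 (ht_le x hx))]
      · simp [w, hx, hAc x hx, negPart_eq_zero.2 ht_pos.le]
    rw [sum_congr rfl fun x _ => hsplit x, sum_add_distrib, sum_ite_mem, univ_inter, sum_const,
      nsmul_eq_mul, mul_comm]
  have hcut : c * #A ≤ #{e : G.Dart | e.fst ∉ A ∧ e.snd ∈ A} :=
    (hG A (hn ▸ hsupp)).trans (by exact_mod_cast G.ncard_vertexBoundary_le A)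
  calc c * ∑ x, u x = c * ∑ x, w x + t * (c * #A) := by rw [hsum]; ring
    _ ≤ ∑ e : G.Dart, (w e.snd - w e.fst)⁺ + t * #{e : G.Dart | e.fst ∉ A ∧ e.snd ∈ A} := by
        gcongr
    _ ≤ ∑ e : G.Dart, (u e.snd - u e.fst)⁺ :=
        G.sum_dart_posPart_truncate_add_le ht_pos.le ht_le hAc

theorem IsVertexExpander.sq_mul_sum_sq_le {c : ℝ} (hG : G.IsVertexExpander c) (hc : 0 ≤ c)
    {d : ℕ} (hdeg : ∀ v, G.degree v ≤ d) {h : V → ℝ} (hh : 0 ≤ h)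
    (hsupp : 2 * #{x | h x ≠ 0} ≤ Fintype.card V) :
    c ^ 2 * ∑ x, h x ^ 2 ≤ d * ∑ e : G.Dart, (h e.fst - h e.snd) ^ 2 := by
  set S := ∑ x, h x ^ 2
  set E := ∑ e : G.Dart, (h e.fst - h e.snd) ^ 2
  have hcoarea : 2 * c * S ≤ ∑ e : G.Dart, |h e.fst - h e.snd| * (h e.fst + h e.snd) := by
    have := hG.mul_sum_le_sum_dart_posPart (u := fun x => h x ^ 2) (fun x => sq_nonneg _)
      (by simpa using hsupp)
    have habs : ∀ a b : ℝ, 0 ≤ a → 0 ≤ b → |a ^ 2 - b ^ 2| = |a - b| * (a + b) :=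
      fun a b ha hb => by rw [sq_sub_sq, abs_mul, abs_of_nonneg (add_nonneg ha hb), mul_comm]
    calc 2 * c * S ≤ 2 * ∑ e : G.Dart, (h e.snd ^ 2 - h e.fst ^ 2)⁺ := by linarith
      _ = _ := by
        rw [← G.sum_dart_abs_sub fun x => h x ^ 2]
        exact sum_congr rfl fun e _ => habs _ _ (hh _) (hh _)
  have hCS : (∑ e : G.Dart, |h e.fst - h e.snd| * (h e.fst + h e.snd)) ^ 2
      ≤ E * ∑ e : G.Dart, (h e.fst + h e.snd) ^ 2 := by
    simpa only [sq_abs] using sum_mul_sq_le_sq_mul_sq univ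
      (fun e : G.Dart => |h e.fst - h e.snd|) fun e => h e.fst + h e.snd
  have hE : 0 ≤ E := sum_nonneg fun _ _ => sq_nonneg _
  have hkey : (c ^ 2 * S) * (4 * S) ≤ (d * E) * (4 * S) := by
    calc (c ^ 2 * S) * (4 * S) = (2 * c * S) ^ 2 := by ring
      _ ≤ E * ∑ e : G.Dart, (h e.fst + h e.snd) ^ 2 :=
        (pow_le_pow_left₀ (by positivity) hcoarea 2).trans hCS
      _ ≤ E * (4 * d * S) := mul_le_mul_of_nonneg_left (G.sum_dart_sq_add_le hdeg h) hE
      _ = (d * E) * (4 * S) := by ring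
  rcases (sum_nonneg fun x _ => sq_nonneg (h x) : 0 ≤ S).eq_or_lt with hS | hS
  · rw [show S = 0 from hS.symm, mul_zero]; positivity
  · exact le_of_mul_le_mul_right hkey (by positivity)

theorem IsVertexExpander.sq_mul_sum_sum_sq_le {c : ℝ} (hG : G.IsVertexExpander c) (hc : 0 ≤ c)
    {d : ℕ} (hdeg : ∀ v, G.degree v ≤ d) (g : V → ℝ) :
    c ^ 2 * ∑ x, ∑ y, (g x - g y) ^ 2 ≤
      4 * d * Fintype.card V * ∑ e : G.Dart, (g e.fst - g e.snd) ^ 2 := by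
  obtain ⟨m, hm_gt, hm_lt⟩ := exists_median g
  have hp := hG.sq_mul_sum_sq_le hc hdeg (h := fun x => (g x - m)⁺) (fun x => posPart_nonneg _)
    (by simpa [sub_pos] using hm_gt)
  have hq := hG.sq_mul_sum_sq_le hc hdeg (h := fun x => (g x - m)⁻) (fun x => negPart_nonneg _)
    (by simpa using hm_lt)
  have hsplit : ∑ x, (g x - m) ^ 2 = ∑ x, (g x - m)⁺ ^ 2 + ∑ x, (g x - m)⁻ ^ 2 := by
    rw [← sum_add_distrib]
    exact sum_congr rfl fun x _ => sq_eq_posPart_sq_add_negPart_sq _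
  have hedge : ∑ e : G.Dart, ((g e.fst - m)⁺ - (g e.snd - m)⁺) ^ 2
      + ∑ e : G.Dart, ((g e.fst - m)⁻ - (g e.snd - m)⁻) ^ 2
      ≤ ∑ e : G.Dart, (g e.fst - g e.snd) ^ 2 := by
    rw [← sum_add_distrib]
    exact sum_le_sum fun e _ => by
      simpa using posPart_sub_sq_add_negPart_sub_sq_le (g e.fst - m) (g e.snd - m)
  calc c ^ 2 * ∑ x, ∑ y, (g x - g y) ^ 2
      ≤ c ^ 2 * (4 * Fintype.card V * ∑ x, (g x - m) ^ 2) := by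
        gcongr; exact sum_sum_sq_sub_le g m
    _ = 4 * Fintype.card V * (c ^ 2 * ∑ x, (g x - m)⁺ ^ 2 + c ^ 2 * ∑ x, (g x - m)⁻ ^ 2) := by
        rw [hsplit]; ring
    _ ≤ 4 * Fintype.card V * (d * ∑ e : G.Dart, ((g e.fst - m)⁺ - (g e.snd - m)⁺) ^ 2
          + d * ∑ e : G.Dart, ((g e.fst - m)⁻ - (g e.snd - m)⁻) ^ 2) := by
        gcongr
    _ ≤ 4 * d * Fintype.card V * ∑ e : G.Dart, (g e.fst - g e.snd) ^ 2 := by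
        rw [← mul_add, ← mul_assoc, mul_right_comm (4 : ℝ)]
        gcongr

theorem IsVertexExpander.sq_mul_sum_sum_norm_sq_le {ι : Type*} {c : ℝ}
    (hG : G.IsVertexExpander c) (hc : 0 ≤ c) {d : ℕ} (hdeg : ∀ v, G.degree v ≤ d)
    (f : V → lp (fun _ : ι => ℝ) 2) :
    c ^ 2 * ∑ x, ∑ y, ‖f x - f y‖ ^ 2 ≤
      4 * d * Fintype.card V * ∑ e : G.Dart, ‖f e.fst - f e.snd‖ ^ 2 := by
  have hsq : ∀ x y, HasSum (fun i => (f x i - f y i) ^ 2) (‖f x - f y‖ ^ 2) :=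
    fun x y => lp.hasSum_sq (f x - f y)
  exact hasSum_le (fun i => hG.sq_mul_sum_sum_sq_le hc hdeg fun x => f x i)
    ((hasSum_sum fun x _ => hasSum_sum fun y _ => hsq x y).mul_left _)
    ((hasSum_sum fun e _ => hsq e.fst e.snd).mul_left _)

theorem IsVertexExpander.sq_mul_sq_le_of_forall_far {ι : Type*} {c : ℝ}
    (hG : G.IsVertexExpander c) (hc : 0 ≤ c) (hconn : G.Connected) {d : ℕ}
    (hdeg : ∀ v, G.degree v ≤ d) {f : V → lp (fun _ : ι => ℝ) 2} {B M : ℝ} (hM : 0 ≤ M) {R : ℕ}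
    (hR : 2 * (d + 1) ^ R ≤ Fintype.card V) (hedge : ∀ x y, G.Adj x y → ‖f x - f y‖ ≤ B)
    (hfar : ∀ x y, R < G.dist x y → M ≤ ‖f x - f y‖) :
    c ^ 2 * M ^ 2 ≤ 8 * d ^ 2 * B ^ 2 := by
  have hN : 0 < Fintype.card V := by have := Nat.one_le_pow R (d + 1) d.succ_pos; omega
  have hfar_card : ∀ x, Fintype.card V ≤ 2 * #{y | R < G.dist x y} := fun x => by
    have := card_filter_add_card_filter_not (s := univ) fun y => G.dist x y ≤ R
    have := G.card_filter_dist_le_le_pow hconn hdeg x R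
    simp only [not_le, card_univ] at *
    omega
  have hlower : (Fintype.card V : ℝ) ^ 2 * M ^ 2 ≤ 2 * ∑ x, ∑ y, ‖f x - f y‖ ^ 2 := by
    rw [mul_sum, sq (Fintype.card V : ℝ), mul_assoc, ← nsmul_eq_mul, ← card_univ, ← sum_const]
    refine sum_le_sum fun x _ => ?_
    calc (Fintype.card V : ℝ) * M ^ 2 ≤ 2 * ∑ y ∈ {y | R < G.dist x y}, M ^ 2 := by
          rw [sum_const, nsmul_eq_mul, ← mul_assoc]
          gcongr
          exact_mod_cast hfar_card x
      _ ≤ 2 * ∑ y ∈ {y | R < G.dist x y}, ‖f x - f y‖ ^ 2 := by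
          gcongr with y hy
          exact hfar x y (mem_filter.1 hy).2
      _ ≤ 2 * ∑ y, ‖f x - f y‖ ^ 2 := by
          gcongr
          exact subset_univ _
  have hupper : ∑ e : G.Dart, ‖f e.fst - f e.snd‖ ^ 2 ≤ d * Fintype.card V * B ^ 2 :=
    calc ∑ e : G.Dart, ‖f e.fst - f e.snd‖ ^ 2 ≤ ∑ e : G.Dart, B ^ 2 :=
          sum_le_sum fun e _ => pow_le_pow_left₀ (norm_nonneg _) (hedge _ _ e.adj) 2
      _ ≤ d * ∑ _v : V, B ^ 2 := G.sum_dart_fst_le hdeg fun _ => sq_nonneg B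
      _ = d * Fintype.card V * B ^ 2 := by rw [sum_const, card_univ, nsmul_eq_mul]; ring
  have : (c ^ 2 * M ^ 2) * Fintype.card V ^ 2 ≤ (8 * d ^ 2 * B ^ 2) * Fintype.card V ^ 2 :=
    calc (c ^ 2 * M ^ 2) * Fintype.card V ^ 2
        = c ^ 2 * ((Fintype.card V : ℝ) ^ 2 * M ^ 2) := by ring
      _ ≤ 2 * (c ^ 2 * ∑ x, ∑ y, ‖f x - f y‖ ^ 2) := by
          linarith [mul_le_mul_of_nonneg_left hlower (sq_nonneg c)]
      _ ≤ 2 * (4 * d * Fintype.card V * ∑ e : G.Dart, ‖f e.fst - f e.snd‖ ^ 2) := by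
          linarith [hG.sq_mul_sum_sum_norm_sq_le hc hdeg f]
      _ ≤ 2 * (4 * d * Fintype.card V * (d * Fintype.card V * B ^ 2)) := by gcongr
      _ = (8 * d ^ 2 * B ^ 2) * Fintype.card V ^ 2 := by ring
  exact le_of_mul_le_mul_right this (by positivity)

end Expander

end SimpleGraph

open SimpleGraph

theorem stmt11_general
    (V : ℕ → Type) [∀ n, Fintype (V n)]
    (G : ∀ n, SimpleGraph (V n)) [∀ n, DecidableRel (G n).Adj]
    (c : ℝ) (hc : 0 < c) (d : ℕ)
    (hconn : ∀ n, (G n).Connected)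
    (hreg : ∀ n, ∀ v : V n, (G n).degree v = d)
    (hcard : Filter.Tendsto (fun n => Fintype.card (V n)) Filter.atTop Filter.atTop)
    (hexp : ∀ n, ∀ A : Finset (V n), 2 * A.card ≤ Fintype.card (V n) →
      c * A.card ≤ ({x : V n | x ∉ A ∧ ∃ a ∈ A, (G n).Adj x a}.ncard : ℝ)) :
    ¬ ∃ (ρ₁ ρ₂ : ℝ → ℝ) (f : ∀ n, V n → lp (fun _ : ℕ => ℝ) 2),
        (∀ t, 0 ≤ t → 0 ≤ ρ₁ t) ∧ (∀ t, 0 ≤ t → 0 ≤ ρ₂ t) ∧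
        Filter.Tendsto ρ₁ Filter.atTop Filter.atTop ∧
        ∀ n, ∀ x y : V n,
          ρ₁ ((G n).dist x y) ≤ ‖f n x - f n y‖ ∧
          ‖f n x - f n y‖ ≤ ρ₂ ((G n).dist x y) := by
  rintro ⟨ρ₁, ρ₂, f, -, hρ₂, hρ₁, hf⟩
  set B := ρ₂ 1
  have hB : 0 ≤ B := hρ₂ 1 zero_le_one
  set M := (3 * d * B + 1) / c
  have hcM : c * M = 3 * d * B + 1 := mul_div_cancel₀ _ hc.ne'
  obtain ⟨r, hr⟩ := Filter.eventually_atTop.1 (hρ₁.eventually_ge_atTop M)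
  obtain ⟨n, hn⟩ := (hcard.eventually_ge_atTop (2 * (d + 1) ^ ⌈r⌉₊)).exists
  have key : c ^ 2 * M ^ 2 ≤ 8 * d ^ 2 * B ^ 2 :=
    IsVertexExpander.sq_mul_sq_le_of_forall_far (hexp n) hc.le (hconn n)
      (fun v => (hreg n v).le) (by positivity) hn
      (fun x y hxy => by simpa [dist_eq_one_iff_adj.2 hxy] using (hf n x y).2)
      (fun x y hxy => (hr _ ((Nat.le_ceil r).trans (by exact_mod_cast hxy.le))).trans (hf n x y).1)
  have hdB : 0 ≤ (d : ℝ) * B := by positivity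
  nlinarith [show c ^ 2 * M ^ 2 = (3 * d * B + 1) ^ 2 by rw [← hcM]; ring]

/-- An expander `{X_n}` with conductance `c > 0` and degree `d` admits no
uniform embedding into `ℓ²`: there are no functions `ρ₁, ρ₂ : ℝ₊ → ℝ₊` with
`ρ₁(t) → ∞` and maps `f_n : X_n → ℓ²` with
`ρ₁(d(x,y)) ≤ ‖f_n(x) − f_n(y)‖ ≤ ρ₂(d(x,y))` for all `n` and all vertices `x, y`. -/
theorem stmt11
    (V : ℕ → Type) [∀ n, Fintype (V n)] [∀ n, DecidableEq (V n)]
    (G : ∀ n, SimpleGraph (V n)) [∀ n, DecidableRel (G n).Adj]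
    (c : ℝ) (hc : 0 < c) (d : ℕ)
    (hconn : ∀ n, (G n).Connected)
    (hreg : ∀ n, ∀ v : V n, (G n).degree v = d)
    (hcard : Filter.Tendsto (fun n => Fintype.card (V n)) Filter.atTop Filter.atTop)
    (hexp : ∀ n, ∀ A : Finset (V n), 2 * A.card ≤ Fintype.card (V n) →
      c * A.card ≤ ({x : V n | x ∉ A ∧ ∃ a ∈ A, (G n).Adj x a}.ncard : ℝ)) :
    ¬ ∃ (ρ₁ ρ₂ : ℝ → ℝ) (f : ∀ n, V n → lp (fun _ : ℕ => ℝ) 2),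
        (∀ t, 0 ≤ t → 0 ≤ ρ₁ t) ∧ (∀ t, 0 ≤ t → 0 ≤ ρ₂ t) ∧
        Filter.Tendsto ρ₁ Filter.atTop Filter.atTop ∧
        ∀ n, ∀ x y : V n,
          ρ₁ ((G n).dist x y) ≤ ‖f n x - f n y‖ ∧
          ‖f n x - f n y‖ ≤ ρ₂ ((G n).dist x y) :=
  stmt11_general V G c hc d hconn hreg hcard hexp
end
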